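/- arXiv:1210.2462 — 4 statements merged into one kernel-verified Lean document; each statement's English description precedes it below -/
import Mathlib

section
/- If a language L ⊆ Σ* is accepted by an automaton with advice having state set Q, then for every n the restriction of the Myhill-Nerode congruence ≡_L to strings of length exactly n has at most |Q| equivalence classes. -/
open Classical

/-- The run of an automaton with advice. -/
def advRun {Q S Γ : Type*} (δ : Q → Γ → S → Q) (A : ℕ → Γ) : Q → ℕ → List S → Q
  | q, _, [] => q
  | q, n, a :: w => advRun δ A (δ q (A n) a) (n + 1) w

/-- The language accepted by an automaton with advice. -/
def advAccepts {Q S Γ : Type*} (δ : Q → Γ → S → Q) (A : ℕ → Γ) (q0 : Q) (F : Set Q) :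
    Set (List S) :=
  {w | advRun δ A q0 0 w ∈ F}

/-- The Myhill-Nerode congruence of a language `L`. -/
def NerodeEq {S : Type*} (L : Set (List S)) (x y : List S) : Prop :=
  ∀ z : List S, x ++ z ∈ L ↔ y ++ z ∈ L

/-!
The state reached after reading a prefix `x` of length `n`, together with `n` itself, determines
how the automaton continues on any suffix, because the advice read next depends only on the
position. Hence two words of length `n` reaching the same state are Nerode-equivalent, and
choosing one word of length `n` per reachable state gives at most `|Q|` representatives.
-/

theorem Set.exists_finset_transversal_card_le {α β : Type*} [Fintype β]
    (f : α → β) (s : Set α) :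
    ∃ R : Finset α, ↑R ⊆ s ∧ R.card ≤ Fintype.card β ∧
      ∀ x ∈ s, ∃ y ∈ R, f x = f y := by
  have hsurj : s.SurjOn f (Finset.univ.filter (· ∈ f '' s) : Finset β) := by
    intro q hq
    simpa using hq
  obtain ⟨R, hRs, hinj, himage⟩ := Finset.exists_subset_injOn_image_eq_of_surjOn s _ hsurj
  refine ⟨R, hRs, ?_, fun x hx => ?_⟩
  · rw [← Finset.card_image_of_injOn hinj, himage]
    exact Finset.card_le_univ _
  · have hfx : f x ∈ R.image f := by simpa [himage] using Set.mem_image_of_mem f hx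
    obtain ⟨y, hy, hyx⟩ := Finset.mem_image.mp hfx
    exact ⟨y, hy, hyx.symm⟩

theorem advRun_append {Q S Γ : Type*} (δ : Q → Γ → S → Q) (A : ℕ → Γ) (w z : List S) (q : Q)
    (m : ℕ) : advRun δ A q m (w ++ z) = advRun δ A (advRun δ A q m w) (m + w.length) z := by
  induction w generalizing q m with
  | nil => rfl
  | cons a w ih =>
    simp only [List.cons_append, advRun, List.length_cons, ih]
    rw [Nat.add_right_comm, Nat.add_assoc]

theorem nerodeEq_advAccepts_of_advRun_eq {Q S Γ : Type*} (δ : Q → Γ → S → Q) (A : ℕ → Γ)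
    (q0 : Q) (F : Set Q) {x y : List S} (hlen : x.length = y.length)
    (hrun : advRun δ A q0 0 x = advRun δ A q0 0 y) :
    NerodeEq (advAccepts δ A q0 F) x y := by
  intro z
  simp only [advAccepts, Set.mem_ofPred_eq, advRun_append, hlen, hrun]

/-- If `L` is accepted by an automaton with advice having state set `Q`, then for
every `n`, the Myhill-Nerode congruence restricted to strings of length `n`
has at most `|Q|` equivalence classes. -/
theorem nerode_classes_le_card_states {S Γ Q : Type*} [Fintype Q]
    (δ : Q → Γ → S → Q) (A : ℕ → Γ) (q0 : Q) (F : Set Q) (L : Set (List S))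
    (hacc : advAccepts δ A q0 F = L) (n : ℕ) :
    ∃ R : Finset (List S), R.card ≤ Fintype.card Q ∧
      (∀ y ∈ R, y.length = n) ∧
      ∀ x : List S, x.length = n → ∃ y ∈ R, NerodeEq L x y := by
  subst hacc
  obtain ⟨R, hlenR, hcard, hcover⟩ :=
    Set.exists_finset_transversal_card_le (advRun δ A q0 0) {x : List S | x.length = n}
  refine ⟨R, hcard, fun y hy => hlenR hy, fun x hx => ?_⟩
  obtain ⟨y, hy, hrun⟩ := hcover x hx
  exact ⟨y, hy, nerodeEq_advAccepts_of_advRun_eq δ A q0 F (hx.trans (hlenR hy).symm) hrun⟩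
end

section
/- If an automaton M with advice A accepts exactly the language Pref(A) of finite prefixes of A, where the states reachable on prefixes of A have been normalized, then there is a deterministic transducer M* with the same states such that M*[B] reads any infinite string B over the input alphabet of M's advice and outputs an infinite string, and M*[A] = A when A is the advice. More precisely: from M one can construct a deterministic transducer M* with M*[A's advice tape] equal to A. -/
open Classical

/-- State of a deterministic transducer after `n` steps: `t` maps (state, input
character) to (next state, output character). -/
def transRun {Q Γ S : Type*} (t : Q → Γ → Q × S) (q : Q) (B : ℕ → Γ) : ℕ → Q
  | 0 => q
  | n + 1 => (t (transRun t q B n) (B n)).1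

/-- The `n`-th output character of the transducer on infinite input `B`. -/
def transOut {Q Γ S : Type*} (t : Q → Γ → Q × S) (q : Q) (B : ℕ → Γ) (n : ℕ) : S :=
  (t (transRun t q B n) (B n)).2

/-- The set of finite prefixes of the infinite string `A`. -/
def Pref {S : Type*} (A : ℕ → S) : Set (List S) :=
  {w | ∀ i : Fin w.length, w.get i = A i}

/-!
Every prefix of `A` is accepted, so the run of `M` on the advice `B` and the prefix of `A` of
length `n` ends in an accepting state `q`; the prefix of length `n + 1` is accepted too, so
`A n` is the unique letter leading from `q` on `B n` into an accepting state. Hence the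
transducer that, from an accepting state, emits this unique letter and moves along `δ`
retraces the run of `M` on `A` and outputs `A`.
-/

theorem map_range_mem_Pref {S : Type*} (A : ℕ → S) (n : ℕ) :
    (List.range n).map A ∈ Pref A := by
  intro i
  simp

section AdviceAutomaton

variable {Q S Γ : Type*} (δ : Q → Γ → S → Q) (B : ℕ → Γ)

theorem advRun_append_singleton (w : List S) (q : Q) (n : ℕ) (a : S) :
    advRun δ B q n (w ++ [a]) = δ (advRun δ B q n w) (B (n + w.length)) a := by
  induction w generalizing q n with
  | nil => rfl
  | cons x w ih =>
    simp only [List.cons_append, advRun, ih, List.length_cons]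
    rw [Nat.add_right_comm, Nat.add_assoc]

theorem advRun_map_range_succ (A : ℕ → S) (q : Q) (n : ℕ) :
    advRun δ B q 0 ((List.range (n + 1)).map A) =
      δ (advRun δ B q 0 ((List.range n).map A)) (B n) (A n) := by
  rw [List.range_succ, List.map_append, List.map_singleton, advRun_append_singleton]
  simp

def transducerOfChoice (σ : Q → Γ → S) : Q → Γ → Q × S :=
  fun q b => (δ q b (σ q b), σ q b)

variable {δ B} {σ : Q → Γ → S} {A : ℕ → S} {q : Q}

theorem transRun_transducerOfChoice
    (hσ : ∀ n, σ (advRun δ B q 0 ((List.range n).map A)) (B n) = A n) (n : ℕ) :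
    transRun (transducerOfChoice δ σ) q B n = advRun δ B q 0 ((List.range n).map A) := by
  induction n with
  | zero => rfl
  | succ n ih =>
    rw [advRun_map_range_succ, ← hσ n, ← ih]
    rfl

theorem transOut_transducerOfChoice
    (hσ : ∀ n, σ (advRun δ B q 0 ((List.range n).map A)) (B n) = A n) (n : ℕ) :
    transOut (transducerOfChoice δ σ) q B n = A n := by
  rw [transOut, transRun_transducerOfChoice hσ]
  exact hσ n

end AdviceAutomaton

theorem automaton_for_pref_to_transducer_general {Q S Γ : Type*}
    (δ : Q → Γ → S → Q) (B : ℕ → Γ) (q0 : Q) (F : Set Q) (A : ℕ → S)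
    (hacc : advAccepts δ B q0 F = Pref A)
    (hnorm : ∀ q ∈ F, ∀ b : Γ, ∃! a : S, δ q b a ∈ F) :
    ∃ t : Q → Γ → Q × S, (∀ q b, (t q b).1 = δ q b (t q b).2) ∧
      ∀ n : ℕ, transOut t q0 B n = A n := by
  have hrun (n : ℕ) : advRun δ B q0 0 ((List.range n).map A) ∈ F := by
    change _ ∈ advAccepts δ B q0 F
    exact hacc ▸ map_range_mem_Pref A n
  let σ : Q → Γ → S := fun q b => if h : q ∈ F then (hnorm q h b).choose else A 0
  refine ⟨transducerOfChoice δ σ, fun _ _ => rfl, transOut_transducerOfChoice fun n => ?_⟩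
  have hq := hrun n
  have hnext := advRun_map_range_succ δ B A q0 n ▸ hrun (n + 1)
  simp only [σ, dif_pos hq]
  exact (hnorm _ hq (B n)).unique (hnorm _ hq (B n)).choose_spec.1 hnext

/-- From a normalized automaton `M` accepting `Pref A` with advice `B`, one can
construct a deterministic transducer `M*` on the same state set `Q` with
`M*[B] = A`. -/
theorem automaton_for_pref_to_transducer {Q S Γ : Type*} [Fintype Q]
    (δ : Q → Γ → S → Q) (B : ℕ → Γ) (q0 : Q) (F : Set Q) (A : ℕ → S)
    (hacc : advAccepts δ B q0 F = Pref A)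
    (hnorm : ∀ q ∈ F, ∀ b : Γ, ∃! a : S, δ q b a ∈ F) :
    ∃ t : Q → Γ → Q × S, (∀ q b, (t q b).1 = δ q b (t q b).2) ∧
      ∀ n : ℕ, transOut t q0 B n = A n :=
  automaton_for_pref_to_transducer_general δ B q0 F A hacc hnorm
end

section
/- There exists an infinite string A over the alphabet Σ = {0, ..., k} such that for every deterministic transducer M with input alphabet Γ = {0, ..., k-1} and output alphabet Σ, and every infinite string B over Γ, M[B] ≠ A. -/
/-
The output of an `n`-state transducer on a block of `m` positions is determined by the state at
the start of the block and the `m` input letters read there, so at most `n * k ^ m` of the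
`(k + 1) ^ m` words of length `m` can appear in its output at a given position. Once `m` is large,
some word of length `m` never appears. A sequence containing every finite word as a factor
therefore contains, for every transducer, a block that the transducer cannot produce in place.
-/

open Classical

section Transducer

variable {Q Γ S : Type*} (t : Q → Γ → Q × S)

lemma transRun_congr (q : Q) {B B' : ℕ → Γ} :
    ∀ {n : ℕ}, (∀ j < n, B j = B' j) → transRun t q B n = transRun t q B' n
  | 0, _ => rfl
  | n + 1, h => by
    simp only [transRun]
    rw [transRun_congr q fun j hj => h j (Nat.lt_succ_of_lt hj), h n n.lt_succ_self]

lemma transOut_congr (q : Q) {B B' : ℕ → Γ} {n : ℕ} (h : ∀ j ≤ n, B j = B' j) :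
    transOut t q B n = transOut t q B' n := by
  rw [transOut, transOut, transRun_congr t q fun j hj => h j hj.le, h n le_rfl]

lemma transRun_add (q : Q) (B : ℕ → Γ) (L : ℕ) :
    ∀ i : ℕ, transRun t q B (L + i) = transRun t (transRun t q B L) (fun n => B (L + n)) i
  | 0 => rfl
  | i + 1 => by
    rw [← add_assoc, transRun, transRun, transRun_add q B L i]

lemma transOut_add (q : Q) (B : ℕ → Γ) (L i : ℕ) :
    transOut t q B (L + i) = transOut t (transRun t q B L) (fun n => B (L + n)) i := by
  rw [transOut, transOut, transRun_add]

theorem exists_word_ne_transOut [Fintype Q] [Fintype Γ] [Fintype S] {m : ℕ}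
    (hm : Fintype.card Q * Fintype.card Γ ^ m < Fintype.card S ^ m) :
    ∃ u : Fin m → S, ∀ (q : Q) (B : ℕ → Γ), ¬ ∀ i : Fin m, transOut t q B i = u i := by
  by_contra! h
  choose q B hqB using h
  have hinj : Function.Injective fun u : Fin m → S => (q u, fun i : Fin m => B u i) := by
    intro u u' huu'
    simp only [Prod.mk.injEq] at huu'
    funext i
    rw [← hqB u i, ← hqB u' i, huu'.1]
    exact transOut_congr t _ fun j hj => congrFun huu'.2 ⟨j, hj.trans_lt i.isLt⟩
  have := Fintype.card_le_of_injective _ hinj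
  simp only [Fintype.card_prod, Fintype.card_fun, Fintype.card_fin] at this
  omega

end Transducer

lemma exists_mul_pow_lt_pow (c : ℕ) {a b : ℕ} (hab : a < b) : ∃ m : ℕ, c * a ^ m < b ^ m := by
  have hb : (0 : ℚ) < b := by exact_mod_cast (Nat.zero_le a).trans_lt hab
  obtain ⟨m, hm⟩ := exists_pow_lt_of_lt_one (x := ((c : ℚ) + 1)⁻¹) (by positivity)
    ((div_lt_one hb).2 (by exact_mod_cast hab) : (a : ℚ) / b < 1)
  refine ⟨m, ?_⟩
  rw [div_pow, div_lt_iff₀ (by positivity), ← div_eq_inv_mul, lt_div_iff₀ (by positivity)] at hm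
  have : (c : ℚ) * a ^ m < b ^ m := by nlinarith [pow_nonneg (Nat.cast_nonneg (α := ℚ) a) m]
  exact_mod_cast this

def Disjunctive {α : Type*} (A : ℕ → α) : Prop :=
  ∀ (m : ℕ) (u : Fin m → α), ∃ L : ℕ, ∀ i : Fin m, A (L + i) = u i

theorem exists_disjunctive (α : Type*) [Countable α] [Nonempty α] :
    ∃ A : ℕ → α, Disjunctive A := by
  obtain ⟨d, hd⟩ := exists_surjective_nat (List α)
  -- The block `[j * j, j * j + 2 * j]` spells a prefix of the word `d (unpair j).1`, and every
  -- word `d a` owns blocks `j = pair a b` with `b` arbitrarily large.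
  refine ⟨fun n => (d (Nat.unpair n.sqrt).1).getD (n - n.sqrt * n.sqrt) (Classical.arbitrary α),
    fun m u => ?_⟩
  obtain ⟨a, ha⟩ := hd (List.ofFn u)
  have hj : m ≤ Nat.pair a m := Nat.right_le_pair a m
  refine ⟨Nat.pair a m * Nat.pair a m, fun i => ?_⟩
  have hsqrt : (Nat.pair a m * Nat.pair a m + i).sqrt = Nat.pair a m :=
    Nat.sqrt_add_eq _ (by omega)
  simp [hsqrt, Nat.unpair_pair, ha]

/-- There is an infinite string `A` over `{0,…,k}` which is not the output of any
deterministic transducer with input alphabet `{0,…,k-1}` on any input. -/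
theorem diagonal_string_not_transducer_output (k : ℕ) :
    ∃ A : ℕ → Fin (k + 1),
      ∀ (Q : Type) [Fintype Q] (t : Q → Fin k → Q × Fin (k + 1)) (q0 : Q)
        (B : ℕ → Fin k), ¬ ∀ n : ℕ, transOut t q0 B n = A n := by
  obtain ⟨A, hA⟩ := exists_disjunctive (Fin (k + 1))
  refine ⟨A, fun Q _ t q0 B hB => ?_⟩
  obtain ⟨m, hm⟩ := exists_mul_pow_lt_pow (Fintype.card Q) k.lt_succ_self
  obtain ⟨u, hu⟩ := exists_word_ne_transOut t (m := m) (by simpa using hm)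
  obtain ⟨L, hL⟩ := hA m u
  exact hu (transRun t q0 B L) (fun n => B (L + n)) fun i => by rw [← transOut_add, hB, hL]
end

section
/- For every deterministic transducer M with finite state set Q, input alphabet Γ of size k and output alphabet Σ of size k+1, there exists a finite string u_M ∈ Σ* of length at most |Q| such that u_M is not a substring of M[B] for any infinite input B ∈ Γ^ω. -/
open Classical

/-!
Let `P` be a set of states. Among the `|P| * |Γ|` transitions out of `P`, some output letter `a`
labels fewer than `|P|` of them, because there are more output letters than input letters. The
states reached by a transition out of `P` labelled `a` therefore form a strictly smaller set `P'`,
and `a` followed by a word avoided from `P'` is avoided from `P`. Starting from all of `Q` and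
iterating until the set is empty yields an avoided word of length at most `|Q|`.
-/

namespace Transducer

variable {Q Γ Δ : Type*} (t : Q → Γ → Q × Δ)

def OutputsAt (q : Q) (B : ℕ → Γ) (m : ℕ) (u : List Δ) : Prop :=
  ∀ i : Fin u.length, transOut t q B (m + i) = u.get i

theorem outputsAt_cons {q : Q} {B : ℕ → Γ} {m : ℕ} {a : Δ} {u : List Δ} :
    OutputsAt t q B m (a :: u) ↔ transOut t q B m = a ∧ OutputsAt t q B (m + 1) u := by
  simp only [OutputsAt, Fin.forall_fin_succ, List.length_cons, Fin.val_zero, add_zero,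
    List.get_eq_getElem, Fin.val_succ, List.getElem_cons_zero, List.getElem_cons_succ,
    add_right_comm m 1, add_assoc]

noncomputable def succOutputting [Fintype Γ] (P : Finset Q) (a : Δ) : Finset Q :=
  ({p ∈ P ×ˢ (Finset.univ : Finset Γ) | (t p.1 p.2).2 = a}).image fun p => (t p.1 p.2).1

theorem transRun_succ_mem_succOutputting [Fintype Γ] {P : Finset Q} {q : Q} {B : ℕ → Γ}
    {m : ℕ} (hm : transRun t q B m ∈ P) :
    transRun t q B (m + 1) ∈ succOutputting t P (transOut t q B m) :=
  Finset.mem_image.mpr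
    ⟨(transRun t q B m, B m),
      Finset.mem_filter.mpr ⟨Finset.mem_product.mpr ⟨hm, Finset.mem_univ _⟩, rfl⟩, rfl⟩

theorem exists_card_succOutputting_lt [Fintype Γ] [Fintype Δ]
    (hcard : Fintype.card Γ < Fintype.card Δ) {P : Finset Q} (hP : P.Nonempty) :
    ∃ a, (succOutputting t P a).card < P.card := by
  have hpairs :
      (P ×ˢ (Finset.univ : Finset Γ)).card < (Finset.univ : Finset Δ).card * P.card := by
    rw [Finset.card_product, Finset.card_univ, Finset.card_univ, mul_comm]
    exact Nat.mul_lt_mul_of_pos_right hcard hP.card_pos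
  obtain ⟨a, -, ha⟩ := Finset.exists_card_fiber_lt_of_card_lt_mul hpairs
  exact ⟨a, Finset.card_image_le.trans_lt ha⟩

theorem exists_not_outputsAt_of_mem [Fintype Γ] [Fintype Δ]
    (hcard : Fintype.card Γ < Fintype.card Δ) (P : Finset Q) :
    ∃ u : List Δ, u.length ≤ P.card ∧
      ∀ q B m, transRun t q B m ∈ P → ¬ OutputsAt t q B m u := by
  rcases P.eq_empty_or_nonempty with rfl | hP
  · exact ⟨[], le_rfl, fun _ _ _ h => absurd h (Finset.notMem_empty _)⟩
  obtain ⟨a, ha⟩ := exists_card_succOutputting_lt t hcard hP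
  obtain ⟨u, hu, havoid⟩ := exists_not_outputsAt_of_mem hcard (succOutputting t P a)
  refine ⟨a :: u, by simp only [List.length_cons]; omega, fun q B m hm hout => ?_⟩
  obtain ⟨rfl, hrest⟩ := (outputsAt_cons t).mp hout
  exact havoid q B (m + 1) (transRun_succ_mem_succOutputting t hm) hrest
termination_by P.card

end Transducer

/-- For every deterministic transducer with input alphabet of size `k` and output
alphabet of size `k+1`, there is a string `u_M` of length at most `|Q|` that is
not a substring of the output on any infinite input. -/
theorem avoided_substring_for_transducer (k : ℕ) (Q : Type) [Fintype Q]
    (t : Q → Fin k → Q × Fin (k + 1)) (q0 : Q) :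
    ∃ u : List (Fin (k + 1)), u.length ≤ Fintype.card Q ∧
      ∀ (B : ℕ → Fin k) (m : ℕ),
        ¬ ∀ i : Fin u.length, transOut t q0 B (m + i) = u.get i := by
  obtain ⟨u, hlen, havoid⟩ :=
    Transducer.exists_not_outputsAt_of_mem t (by simp) (Finset.univ : Finset Q)
  exact ⟨u, hlen, fun B m => havoid q0 B m (Finset.mem_univ _)⟩
end
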